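/- arXiv:2207.00047 — 2 statements merged into one kernel-verified Lean document; each statement's English description precedes it below -/
import Mathlib

section
/- Let q be a prime power and k ≥ 2 an integer. For the polynomial ring F_q[T], define μ_k(f) = 1 if the monic polynomial f is not divisible by m^k for any monic irreducible m, and 0 otherwise, and Q_{k,0}(X) = Σ_{f monic, deg f < X} μ_k(f). Then for every positive integer X, Q_{k,0}(X) = (q^X − 1)/(q − 1) − [X > k] · q(q^{X−k} − 1)/(q − 1), where [X > k] is 1 if X > k and 0 otherwise. -/
/-!
Every monic `f` factors uniquely as `a * b ^ k` with `a` monic and `k`-free and `b` monic: split off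
`k`-th powers of irreducible factors, and read the multiplicities in `a` and `b` off those in `f`
as remainders and quotients mod `k`. So the monic polynomials of degree `< X` are in bijection with
pairs `(a, b)` with `deg a + k deg b < X`. The pairs with `b = 1` are the `k`-free polynomials
of degree `< X`; the others are `b = b' * X + c` with `c ∈ 𝔽_q`, which are `q` copies of the
pairs for `X - k`. Hence `M(X) = Q(X) + q M(X - k)`, where `M(n) = (q ^ n - 1) / (q - 1)` counts
the monic polynomials of degree `< n`, by the same splitting `b = 1` or `b = b' * X + c`.
-/

open Polynomial UniqueFactorizationMonoid Set

namespace Polynomial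

variable {R : Type*} [Semiring R]

def PowFree (k : ℕ) (f : R[X]) : Prop :=
  ¬ ∃ m : R[X], m.Monic ∧ Irreducible m ∧ m ^ k ∣ f

variable (R) in
def monicDegLT (n : ℕ) : Set R[X] :=
  {f | f.Monic ∧ f.natDegree < n}

def powFreeMonicDegLT (k n : ℕ) : Set R[X] :=
  {f | f.Monic ∧ f.natDegree < n ∧ PowFree k f}

def powFreeDecompPairs (k n : ℕ) : Set (R[X] × R[X]) :=
  {ab | ab.1.Monic ∧ ab.2.Monic ∧ PowFree k ab.1 ∧ ab.1.natDegree + k * ab.2.natDegree < n}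

theorem Monic.natDegree_mul_pow {a b : R[X]} (ha : a.Monic) (hb : b.Monic) (k : ℕ) :
    (a * b ^ k).natDegree = a.natDegree + k * b.natDegree := by
  rw [ha.natDegree_mul (hb.pow k), hb.natDegree_pow]

theorem finite_setOf_natDegree_lt [Finite R] (n : ℕ) : {f : R[X] | f.natDegree < n}.Finite :=
  (finite_range fun c : Fin n → R => ∑ i : Fin n, monomial (i : ℕ) (c i)).subset fun f hf =>
    ⟨fun i => f.coeff i, by
      change ∑ i : Fin n, monomial (i : ℕ) (f.coeff i) = f
      rw [Fin.sum_univ_eq_sum_range (fun i => monomial i (f.coeff i)), ← as_sum_range' f n hf]⟩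

theorem finite_monicDegLT [Finite R] (n : ℕ) : (monicDegLT R n).Finite :=
  (finite_setOf_natDegree_lt n).subset fun _ hf => hf.2

theorem divX_mul_X_add_C (b : R[X]) (c : R) : (b * X + C c).divX = b := by
  ext n
  simp [divX_add, coeff_mul_X]

theorem mul_X_add_C_injective :
    Function.Injective fun cb : R × R[X] => cb.2 * X + C cb.1 := by
  rintro ⟨c, b⟩ ⟨c', b'⟩ h
  simp only at h
  refine Prod.ext ?_ ?_
  · simpa using congrArg (coeff · 0) h
  · simpa [divX_mul_X_add_C] using congrArg divX h

theorem Monic.divX {b : R[X]} (hb : b.Monic) (h : 0 < b.natDegree) : b.divX.Monic := by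
  rw [Monic.def, Polynomial.leadingCoeff, natDegree_divX_eq_natDegree_tsub_one, coeff_divX,
    Nat.sub_add_cancel h]
  exact hb

theorem Monic.exists_eq_mul_X_add_C {b : R[X]} (hb : b.Monic) (h : 0 < b.natDegree) :
    ∃ c b', b'.Monic ∧ b'.natDegree + 1 = b.natDegree ∧ b' * X + C c = b :=
  ⟨b.coeff 0, b.divX, hb.divX h, by rw [natDegree_divX_eq_natDegree_tsub_one]; omega,
    divX_mul_X_add b⟩

section Nontrivial

variable [Nontrivial R]

theorem Monic.degree_C_lt_mul_X {b : R[X]} (hb : b.Monic) (c : R) :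
    (C c).degree < (b * X).degree := by
  rw [degree_eq_natDegree (hb.mul monic_X).ne_zero, natDegree_mul_X hb.ne_zero]
  exact degree_C_le.trans_lt (by exact_mod_cast Nat.succ_pos _)

theorem Monic.mul_X_add_C {b : R[X]} (hb : b.Monic) (c : R) : (b * X + C c).Monic :=
  (hb.mul monic_X).add_of_left (hb.degree_C_lt_mul_X c)

theorem Monic.natDegree_mul_X_add_C {b : R[X]} (hb : b.Monic) (c : R) :
    (b * X + C c).natDegree = b.natDegree + 1 := by
  rw [natDegree_add_eq_left_of_degree_lt (hb.degree_C_lt_mul_X c), natDegree_mul_X hb.ne_zero]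

theorem Monic.mul_X_add_C_ne_one {b : R[X]} (hb : b.Monic) (c : R) : b * X + C c ≠ 1 := by
  intro h
  simpa [h] using hb.natDegree_mul_X_add_C c

theorem monicDegLT_succ (n : ℕ) :
    monicDegLT R (n + 1) =
      insert 1 ((fun cb : R × R[X] => cb.2 * X + C cb.1) '' (univ ×ˢ monicDegLT R n)) := by
  ext f
  simp only [monicDegLT, mem_insert_iff, mem_image, mem_prod, mem_univ, true_and, mem_ofPred_eq,
    Prod.exists]
  constructor
  · rintro ⟨hf, hn⟩
    rcases Nat.eq_zero_or_pos f.natDegree with h0 | hpos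
    · exact Or.inl (hf.natDegree_eq_zero.mp h0)
    · obtain ⟨c, b, hb, hdeg, rfl⟩ := hf.exists_eq_mul_X_add_C hpos
      exact Or.inr ⟨c, b, ⟨hb, by omega⟩, rfl⟩
  · rintro (rfl | ⟨c, b, ⟨hb, hn⟩, rfl⟩)
    · exact ⟨monic_one, by simp⟩
    · exact ⟨hb.mul_X_add_C c, by rw [hb.natDegree_mul_X_add_C]; omega⟩

theorem powFreeDecompPairs_eq_union (k n : ℕ) :
    powFreeDecompPairs k n =
      (fun a : R[X] => (a, 1)) '' powFreeMonicDegLT k n ∪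
        (fun cab : R × (R[X] × R[X]) => (cab.2.1, cab.2.2 * X + C cab.1)) ''
          (univ ×ˢ powFreeDecompPairs k (n - k)) := by
  ext ⟨a, b⟩
  simp only [powFreeDecompPairs, powFreeMonicDegLT, mem_union, mem_image, mem_prod, mem_univ,
    true_and, mem_ofPred_eq, Prod.exists, Prod.mk.injEq]
  constructor
  · rintro ⟨ha, hb, hfree, hn⟩
    rcases Nat.eq_zero_or_pos b.natDegree with h0 | hpos
    · obtain rfl := hb.natDegree_eq_zero.mp h0
      exact Or.inl ⟨a, ⟨ha, by simpa using hn, hfree⟩, rfl, rfl⟩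
    · obtain ⟨c, b', hb', hdeg, rfl⟩ := hb.exists_eq_mul_X_add_C hpos
      rw [← hdeg, mul_add] at hn
      exact Or.inr ⟨c, a, b', ⟨ha, hb', hfree, by omega⟩, rfl, rfl⟩
  · rintro (⟨a, ⟨ha, hn, hfree⟩, rfl, rfl⟩ | ⟨c, a, b, ⟨ha, hb, hfree, hn⟩, rfl, rfl⟩)
    · exact ⟨ha, monic_one, hfree, by simpa using hn⟩
    · refine ⟨ha, hb.mul_X_add_C c, hfree, ?_⟩
      rw [hb.natDegree_mul_X_add_C, mul_add]
      omega

theorem ncard_monicDegLT_succ [Finite R] (n : ℕ) :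
    (monicDegLT R (n + 1)).ncard = Nat.card R * (monicDegLT R n).ncard + 1 := by
  have hone : (1 : R[X]) ∉
      (fun cb : R × R[X] => cb.2 * X + C cb.1) '' (univ ×ˢ monicDegLT R n) :=
    fun ⟨⟨c, _⟩, ⟨_, hb, _⟩, h⟩ => hb.mul_X_add_C_ne_one c h
  have hfin := (finite_univ.prod (finite_monicDegLT (R := R) n)).image
    fun cb : R × R[X] => cb.2 * X + C cb.1
  rw [monicDegLT_succ, ncard_insert_of_notMem hone hfin,
    ncard_image_of_injective _ mul_X_add_C_injective, ncard_prod, ncard_univ]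

theorem ncard_monicDegLT [Finite R] (n : ℕ) :
    (monicDegLT R n).ncard = ∑ i ∈ Finset.range n, Nat.card R ^ i := by
  induction n with
  | zero => simp [monicDegLT]
  | succ n ih =>
    rw [ncard_monicDegLT_succ, ih, Finset.sum_range_succ', Finset.mul_sum]
    simp [pow_succ']

end Nontrivial

section Field

variable {F : Type*} [Field F] {k : ℕ}

theorem PowFree.count_normalizedFactors_lt [DecidableEq F] (hk : 0 < k) {a : F[X]}
    (h : PowFree k a) (ha : a ≠ 0) (p : F[X]) : (normalizedFactors a).count p < k := by
  by_contra! hc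
  have hp : p ∈ normalizedFactors a := Multiset.count_pos.mp (hk.trans_le hc)
  have hprime := prime_of_normalized_factor p hp
  refine h ⟨p, ?_, hprime.irreducible, ?_⟩
  · rw [← normalize_normalized_factor p hp]
    exact monic_normalize hprime.ne_zero
  · calc p ^ k ∣ (normalizedFactors a).prod := by
          rw [← Multiset.prod_replicate]
          exact Multiset.prod_dvd_prod_of_le (Multiset.le_count_iff_replicate_le.mp hc)
      _ ∣ a := (prod_normalizedFactors ha).dvd

theorem count_normalizedFactors_mul_pow [DecidableEq F] {a b : F[X]} (ha : a ≠ 0) (hb : b ≠ 0)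
    (p : F[X]) : (normalizedFactors (a * b ^ k)).count p =
      (normalizedFactors a).count p + k * (normalizedFactors b).count p := by
  rw [normalizedFactors_mul ha (pow_ne_zero _ hb), normalizedFactors_pow, Multiset.count_add,
    Multiset.count_nsmul]

theorem Monic.eq_of_normalizedFactors_eq [DecidableEq F] {f g : F[X]} (hf : f.Monic)
    (hg : g.Monic) (h : normalizedFactors f = normalizedFactors g) : f = g := by
  rw [← hf.normalize_eq_self, ← hg.normalize_eq_self, ← prod_normalizedFactors_eq hf.ne_zero,
    ← prod_normalizedFactors_eq hg.ne_zero, h]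

theorem injOn_mul_pow (hk : 0 < k) :
    InjOn (fun ab : F[X] × F[X] => ab.1 * ab.2 ^ k)
      {ab | ab.1.Monic ∧ ab.2.Monic ∧ PowFree k ab.1} := by
  classical
  rintro ⟨a, b⟩ ⟨ha, hb, hfa⟩ ⟨a', b'⟩ ⟨ha', hb', hfa'⟩ h
  have hcount (p : F[X]) : (normalizedFactors a).count p = (normalizedFactors a').count p ∧
      (normalizedFactors b).count p = (normalizedFactors b').count p := by
    obtain ⟨hdiv, hmod⟩ := (Nat.div_mod_unique hk).mpr
      ⟨(count_normalizedFactors_mul_pow ha.ne_zero hb.ne_zero p).symm,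
        hfa.count_normalizedFactors_lt hk ha.ne_zero p⟩
    obtain ⟨hdiv', hmod'⟩ := (Nat.div_mod_unique hk).mpr
      ⟨(count_normalizedFactors_mul_pow ha'.ne_zero hb'.ne_zero p).symm,
        hfa'.count_normalizedFactors_lt hk ha'.ne_zero p⟩
    simp only at h
    rw [h] at hdiv hmod
    exact ⟨hmod.symm.trans hmod', hdiv.symm.trans hdiv'⟩
  exact Prod.ext (ha.eq_of_normalizedFactors_eq ha' (Multiset.ext.mpr fun p => (hcount p).1))
    (hb.eq_of_normalizedFactors_eq hb' (Multiset.ext.mpr fun p => (hcount p).2))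

theorem Monic.exists_powFree_mul_pow (hk : 0 < k) {f : F[X]} (hf : f.Monic) :
    ∃ a b : F[X], a.Monic ∧ b.Monic ∧ PowFree k a ∧ a * b ^ k = f := by
  induction h : f.natDegree using Nat.strong_induction_on generalizing f with
  | _ n ih =>
  by_cases hfree : PowFree k f
  · exact ⟨f, 1, hf, monic_one, hfree, by simp⟩
  obtain ⟨m, hm, hirr, g, rfl⟩ := not_not.mp hfree
  have hg : g.Monic := (hm.pow k).of_mul_monic_left hf
  have hlt : g.natDegree < n := by
    rw [← h, (hm.pow k).natDegree_mul hg, hm.natDegree_pow]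
    have := Nat.mul_pos hk hirr.natDegree_pos
    omega
  obtain ⟨a, b, ha, hb, hfree', rfl⟩ := ih _ hlt hg rfl
  exact ⟨a, m * b, ha, hm.mul hb, hfree', by ring⟩

theorem image_mul_pow_powFreeDecompPairs (hk : 0 < k) (n : ℕ) :
    (fun ab : F[X] × F[X] => ab.1 * ab.2 ^ k) '' powFreeDecompPairs k n = monicDegLT F n := by
  ext f
  constructor
  · rintro ⟨⟨a, b⟩, ⟨ha, hb, -, hn⟩, rfl⟩
    exact ⟨ha.mul (hb.pow k), by rwa [ha.natDegree_mul_pow hb]⟩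
  · rintro ⟨hf, hn⟩
    obtain ⟨a, b, ha, hb, hfree, rfl⟩ := hf.exists_powFree_mul_pow hk
    exact ⟨(a, b), ⟨ha, hb, hfree, by rwa [← ha.natDegree_mul_pow hb]⟩, rfl⟩

theorem injOn_mul_pow_powFreeDecompPairs (hk : 0 < k) (n : ℕ) :
    InjOn (fun ab : F[X] × F[X] => ab.1 * ab.2 ^ k) (powFreeDecompPairs k n) :=
  (injOn_mul_pow hk).mono fun _ h => by exact ⟨h.1, h.2.1, h.2.2.1⟩

theorem ncard_powFreeDecompPairs (hk : 0 < k) (n : ℕ) :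
    (powFreeDecompPairs k n : Set (F[X] × F[X])).ncard = (monicDegLT F n).ncard := by
  rw [← image_mul_pow_powFreeDecompPairs hk, (injOn_mul_pow_powFreeDecompPairs hk n).ncard_image]

theorem finite_powFreeDecompPairs [Finite F] (hk : 0 < k) (n : ℕ) :
    (powFreeDecompPairs k n : Set (F[X] × F[X])).Finite :=
  Finite.of_finite_image (by rw [image_mul_pow_powFreeDecompPairs hk]; exact finite_monicDegLT n)
    (injOn_mul_pow_powFreeDecompPairs hk n)

theorem ncard_monicDegLT_eq_ncard_powFreeMonicDegLT_add [Finite F] (hk : 0 < k) (n : ℕ) :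
    (monicDegLT F n).ncard =
      (powFreeMonicDegLT k n : Set F[X]).ncard + Nat.card F * (monicDegLT F (n - k)).ncard := by
  have hdisj : Disjoint ((fun a : F[X] => (a, 1)) '' powFreeMonicDegLT k n)
      ((fun cab : F × (F[X] × F[X]) => (cab.2.1, cab.2.2 * X + C cab.1)) ''
        (univ ×ˢ powFreeDecompPairs k (n - k))) := by
    rw [disjoint_left]
    rintro _ ⟨a, -, rfl⟩ ⟨⟨c, a', b'⟩, ⟨-, -, hb', -⟩, h⟩
    exact hb'.mul_X_add_C_ne_one c (Prod.mk.inj h).2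
  rw [← ncard_powFreeDecompPairs hk, ← ncard_powFreeDecompPairs hk, powFreeDecompPairs_eq_union,
    ncard_union_eq hdisj (((finite_monicDegLT n).subset fun _ h => ⟨h.1, h.2.1⟩).image _)
      ((finite_univ.prod (finite_powFreeDecompPairs hk _)).image _),
    ncard_image_of_injective _ fun a b h => (Prod.mk.inj h).1, ncard_image_of_injective, ncard_prod,
    ncard_univ]
  rintro ⟨c, a, b⟩ ⟨c', a', b'⟩ h
  obtain ⟨rfl, h⟩ := Prod.mk.inj h
  obtain ⟨rfl, rfl⟩ := Prod.mk.inj (mul_X_add_C_injective h)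
  rfl

end Field

end Polynomial

theorem stmt0_general (q k : ℕ) (hk : 2 ≤ k)
    (F : Type) [Field F] [Fintype F] (hF : Fintype.card F = q)
    (X : ℕ) :
    (Nat.card {f : F[X] // f.Monic ∧ f.natDegree < X ∧
        ¬ ∃ m : F[X], m.Monic ∧ Irreducible m ∧ m ^ k ∣ f} : ℚ) =
      ((q : ℚ) ^ X - 1) / ((q : ℚ) - 1) -
        (if k < X then (q : ℚ) * ((q : ℚ) ^ (X - k) - 1) / ((q : ℚ) - 1) else 0) := by
  have hq : (q : ℚ) ≠ 1 := by
    rw [← hF]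
    exact_mod_cast Fintype.one_lt_card.ne'
  have hmonics (n : ℕ) : ((monicDegLT F n).ncard : ℚ) = ((q : ℚ) ^ n - 1) / (q - 1) := by
    rw [ncard_monicDegLT, Nat.card_eq_fintype_card, hF]
    push_cast
    exact geom_sum_eq hq n
  have htail : (if k < X then (q : ℚ) * ((q : ℚ) ^ (X - k) - 1) / ((q : ℚ) - 1) else 0) =
      q * (monicDegLT F (X - k)).ncard := by
    rw [hmonics]
    split_ifs with hkX
    · ring
    · simp [Nat.sub_eq_zero_of_le (not_lt.mp hkX)]
  have hrec := ncard_monicDegLT_eq_ncard_powFreeMonicDegLT_add (F := F) (k := k) (by omega) X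
  rw [Nat.card_eq_fintype_card, hF] at hrec
  change (Nat.card (powFreeMonicDegLT k X : Set F[X]) : ℚ) = _
  rw [Nat.card_coe_set_eq, htail, ← hmonics, hrec]
  push_cast
  ring

/-- The number of `k`-free monic polynomials of degree `< X` over `𝔽_q`. -/
theorem stmt0 (q k : ℕ) (hq : ∃ p n : ℕ, p.Prime ∧ 0 < n ∧ q = p ^ n) (hk : 2 ≤ k)
    (F : Type) [Field F] [Fintype F] (hF : Fintype.card F = q)
    (X : ℕ) (hX : 0 < X) :
    (Nat.card {f : F[X] // f.Monic ∧ f.natDegree < X ∧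
        ¬ ∃ m : F[X], m.Monic ∧ Irreducible m ∧ m ^ k ∣ f} : ℚ) =
      ((q : ℚ) ^ X - 1) / ((q : ℚ) - 1) -
        (if k < X then (q : ℚ) * ((q : ℚ) ^ (X - k) - 1) / ((q : ℚ) - 1) else 0) :=
  stmt0_general q k hk F hF X
end

section
/- For the polynomial ring F_q[T], define Φ(f) = |f| · Π_{m | f, m monic irreducible} (1 − 1/|m|) for monic f, where |f| = q^{deg f}, and F_{Φ,0}(X) = Σ_{f monic, deg f < X} Φ(f). Then for every positive integer X, F_{Φ,0}(X) = (q^{2X−1} + 1)/(q + 1). -/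
open Polynomial UniqueFactorizationMonoid

/-- The function-field Euler totient of a monic polynomial `f` over `𝔽_q`:
`Φ(f) = q^(deg f) · ∏_{m | f, m monic irreducible} (1 - 1/q^(deg m))`. -/
noncomputable def totientFF (q : ℕ) {F : Type} [Field F] [Fintype F] [DecidableEq F]
    (f : F[X]) : ℚ :=
  (q : ℚ) ^ f.natDegree *
    ∏ m ∈ (normalizedFactors f).toFinset, (1 - 1 / (q : ℚ) ^ m.natDegree)

/-!
Expanding the product, `Φ(f) = ∑_{d ∣ f} μ(d) |f| / |d|` over the squarefree monic divisors `d`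
of `f`. Among the `q^n` monic polynomials of degree `n`, a monic `d` of degree `k ≤ n` divides
exactly `q^(n-k)`, so exchanging the sums gives `∑_{deg f = n} Φ(f) = ∑_{k ≤ n} b_k q^(2(n-k))`
with `b_k = ∑_{deg d = k} μ(d)`. The same exchange applied to `∑_{d ∣ f} μ(d) = [f = 1]` gives
`∑_{k ≤ n} b_k q^(n-k) = [n = 0]` for all `n`, which forces `b_0 = 1`, `b_1 = -q` and `b_k = 0`
for `k ≥ 2`. Hence the monic polynomials of degree `n ≥ 1` contribute `q^(2n) - q^(2n-1)`, and
summing this alternating geometric series over `n < X` gives `(q^(2X-1) + 1) / (q + 1)`.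
-/

open Finset

lemma eq_ite_of_sum_range_mul_pow_eq_ite {R : Type*} [CommRing R] {b : ℕ → R} {q : R}
    (h : ∀ n, ∑ k ∈ range (n + 1), b k * q ^ (n - k) = if n = 0 then 1 else 0) (k : ℕ) :
    b k = if k = 0 then 1 else if k = 1 then -q else 0 := by
  cases k with
  | zero => simpa using h 0
  | succ j =>
    have hsplit : ∑ k ∈ range (j + 2), b k * q ^ (j + 1 - k) =
        b (j + 1) + q * ∑ k ∈ range (j + 1), b k * q ^ (j - k) := by
      rw [sum_range_succ, Nat.sub_self, pow_zero, mul_one, mul_sum, add_comm]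
      congr 1
      refine sum_congr rfl fun k hk ↦ ?_
      rw [Nat.sub_add_comm (Nat.lt_succ_iff.mp (mem_range.mp hk)), pow_succ]
      ring
    have hj := h (j + 1)
    rw [hsplit, h j] at hj
    rcases eq_or_ne j 0 with rfl | hj0
    · simp only [zero_add, ↓reduceIte, mul_one, one_ne_zero] at hj ⊢
      linear_combination hj
    · simpa [hj0] using hj

lemma add_one_mul_sum_range_pow_two_mul_sub {R : Type*} [CommRing R] (q : R) (m : ℕ) :
    (q + 1) * ∑ n ∈ range (m + 1), (q ^ (2 * n) - if n = 0 then 0 else q ^ (2 * n - 1)) =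
      q ^ (2 * m + 1) + 1 := by
  induction m with
  | zero => simp
  | succ m ih =>
    rw [sum_range_succ, mul_add, ih, if_neg m.succ_ne_zero,
      show 2 * (m + 1) - 1 = 2 * m + 1 by omega]
    ring

section MonicsOfDegree

variable {R : Type*} [CommRing R] [Fintype R] [DecidableEq R]

variable (R) in
noncomputable def monicsOfDegree (n : ℕ) : Finset R[X] :=
  univ.image fun v : Fin n → R ↦ X ^ n + ((degreeLTEquiv R n).symm v : R[X])

lemma card_monicsOfDegree (n : ℕ) : #(monicsOfDegree R n) = Fintype.card R ^ n := by
  rw [monicsOfDegree, card_image_of_injective, card_univ, Fintype.card_fun, Fintype.card_fin]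
  intro v w h
  simpa using add_left_cancel h

variable [Nontrivial R]

lemma mem_monicsOfDegree {n : ℕ} {f : R[X]} : f ∈ monicsOfDegree R n ↔ IsMonicOfDegree f n := by
  simp only [monicsOfDegree, mem_image, mem_univ, true_and]
  constructor
  · rintro ⟨v, rfl⟩
    have hv := mem_degreeLT.mp ((degreeLTEquiv R n).symm v).2
    refine ⟨?_, monic_X_pow_add hv⟩
    rw [natDegree_add_eq_left_of_degree_lt (by rwa [degree_X_pow]), natDegree_X_pow]
  · intro hf
    have hlt : (f - X ^ n).degree < (n : WithBot ℕ) := by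
      rcases eq_or_ne n 0 with rfl | hn
      · simp [isMonicOfDegree_zero_iff.mp hf]
      · exact degree_le_natDegree.trans_lt (WithBot.coe_lt_coe.mpr (hf.natDegree_sub_X_pow hn))
    refine ⟨degreeLTEquiv R n ⟨f - X ^ n, mem_degreeLT.mpr hlt⟩, ?_⟩
    simp

lemma filter_dvd_monicsOfDegree {d : R[X]} [DecidablePred (d ∣ ·)] {k n : ℕ}
    (hd : IsMonicOfDegree d k) (hkn : k ≤ n) :
    {f ∈ monicsOfDegree R n | d ∣ f} = (monicsOfDegree R (n - k)).image (d * ·) := by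
  ext f
  simp only [mem_filter, mem_image, mem_monicsOfDegree]
  constructor
  · rintro ⟨hf, g, rfl⟩
    exact ⟨g, hd.of_mul_left (by rwa [Nat.add_sub_cancel' hkn]), rfl⟩
  · rintro ⟨g, hg, rfl⟩
    exact ⟨by simpa [Nat.add_sub_cancel' hkn] using hd.mul hg, dvd_mul_right d g⟩

lemma card_filter_dvd_monicsOfDegree {d : R[X]} [DecidablePred (d ∣ ·)] {k n : ℕ}
    (hd : IsMonicOfDegree d k) :
    #{f ∈ monicsOfDegree R n | d ∣ f} = if k ≤ n then Fintype.card R ^ (n - k) else 0 := by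
  split_ifs with hkn
  · rw [filter_dvd_monicsOfDegree hd hkn, card_image_of_injective _ hd.monic.isRegular.left,
      card_monicsOfDegree]
  · refine card_eq_zero.mpr (filter_eq_empty_iff.mpr fun f hf ⟨g, hfg⟩ ↦ hkn ?_)
    rw [mem_monicsOfDegree] at hf
    have hg : g ≠ 0 := by rintro rfl; simp [hf.ne_zero] at hfg
    rw [← hf.natDegree_eq, hfg, hd.monic.natDegree_mul' hg, hd.natDegree_eq]
    exact Nat.le_add_right k _

lemma finsum_mem_monic_natDegree_lt {M : Type*} [AddCommMonoid M] (g : R[X] → M) (N : ℕ) :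
    ∑ᶠ f ∈ {f : R[X] | f.Monic ∧ f.natDegree < N}, g f =
      ∑ n ∈ range N, ∑ f ∈ monicsOfDegree R n, g f := by
  have hdisj : (range N : Set ℕ).PairwiseDisjoint (monicsOfDegree R) :=
    fun a _ b _ hab ↦ disjoint_left.mpr fun f ha hb ↦ hab
      ((mem_monicsOfDegree.mp ha).natDegree_eq.symm.trans (mem_monicsOfDegree.mp hb).natDegree_eq)
  rw [← sum_biUnion hdisj, ← finsum_mem_coe_finset]
  congr
  ext f
  simp [mem_monicsOfDegree, isMonicOfDegree_iff', and_comm]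

end MonicsOfDegree

section Totient

variable {F : Type} [Field F] [DecidableEq F]

lemma subset_toFinset_normalizedFactors_iff {f : F[X]} (hf : f ≠ 0) {t : Finset F[X]}
    (ht : ∀ m ∈ t, Irreducible m ∧ m.Monic) :
    t ⊆ (normalizedFactors f).toFinset ↔ (∏ m ∈ t, m) ∣ f := by
  constructor
  · intro h
    have hle : t.val ≤ normalizedFactors f :=
      (Multiset.le_iff_subset t.nodup).mpr fun m hm ↦ Multiset.mem_toFinset.mp (h hm)
    rw [← t.prod_map_val, Multiset.map_id']
    exact (Multiset.prod_dvd_prod_of_le hle).trans (prod_normalizedFactors hf).dvd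
  · intro hdvd m hm
    refine Multiset.mem_toFinset.mpr ((Polynomial.mem_normalizedFactors_iff hf).mpr ?_)
    exact ⟨(ht m hm).1, (ht m hm).2, (dvd_prod_of_mem _ hm).trans hdvd⟩

variable [Fintype F]

lemma totientFF_eq_sum_powerset (q : ℕ) (f : F[X]) :
    totientFF q f = (q : ℚ) ^ f.natDegree * ∑ t ∈ (normalizedFactors f).toFinset.powerset,
      (-1) ^ #t * ((q : ℚ) ^ (∏ m ∈ t, m).natDegree)⁻¹ := by
  have hsub : ∀ m : F[X], (1 - 1 / (q : ℚ) ^ m.natDegree) = 1 + -((q : ℚ) ^ m.natDegree)⁻¹ :=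
    fun m ↦ by ring
  rw [totientFF, prod_congr rfl fun m _ ↦ hsub m, prod_one_add]
  congr 1
  refine sum_congr rfl fun t ht ↦ ?_
  have hne : ∀ m ∈ t, m ≠ 0 := fun m hm ↦ ne_zero_of_mem_normalizedFactors
    (Multiset.mem_toFinset.mp (mem_powerset.mp ht hm))
  rw [prod_neg, prod_inv_distrib, prod_pow_eq_pow_sum, natDegree_prod _ _ hne]

open Classical in
variable (F) in
noncomputable def monicIrreduciblesDegreeLE (n : ℕ) : Finset F[X] :=
  {m ∈ (range (n + 1)).biUnion (monicsOfDegree F) | Irreducible m}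

lemma mem_monicIrreduciblesDegreeLE {n : ℕ} {m : F[X]} :
    m ∈ monicIrreduciblesDegreeLE F n ↔ Irreducible m ∧ m.Monic ∧ m.natDegree ≤ n := by
  simp only [monicIrreduciblesDegreeLE, mem_filter, mem_biUnion, mem_range, mem_monicsOfDegree,
    isMonicOfDegree_iff']
  constructor
  · rintro ⟨⟨k, hk, hdeg, hm⟩, hirr⟩
    exact ⟨hirr, hm, by omega⟩
  · rintro ⟨hirr, hm, hdeg⟩
    exact ⟨⟨m.natDegree, by omega, rfl, hm⟩, hirr⟩

lemma monicIrreduciblesDegreeLE_mono {k n : ℕ} (hkn : k ≤ n) :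
    monicIrreduciblesDegreeLE F k ⊆ monicIrreduciblesDegreeLE F n := fun m hm ↦ by
  obtain ⟨hirr, hmon, hdeg⟩ := mem_monicIrreduciblesDegreeLE.mp hm
  exact mem_monicIrreduciblesDegreeLE.mpr ⟨hirr, hmon, hdeg.trans hkn⟩

lemma toFinset_normalizedFactors_subset {f : F[X]} {n : ℕ} (hf : IsMonicOfDegree f n) :
    (normalizedFactors f).toFinset ⊆ monicIrreduciblesDegreeLE F n := fun m hm ↦ by
  obtain ⟨hirr, hmon, hdvd⟩ :=
    (Polynomial.mem_normalizedFactors_iff hf.ne_zero).mp (Multiset.mem_toFinset.mp hm)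
  exact mem_monicIrreduciblesDegreeLE.mpr
    ⟨hirr, hmon, hf.natDegree_eq ▸ natDegree_le_of_dvd hdvd hf.ne_zero⟩

lemma filter_dvd_powerset_monicIrreduciblesDegreeLE {f : F[X]} {n : ℕ}
    [DecidablePred fun t : Finset F[X] ↦ (∏ m ∈ t, m) ∣ f] (hf : IsMonicOfDegree f n) :
    {t ∈ (monicIrreduciblesDegreeLE F n).powerset | (∏ m ∈ t, m) ∣ f} =
      (normalizedFactors f).toFinset.powerset := by
  have hirr : ∀ t ⊆ monicIrreduciblesDegreeLE F n, ∀ m ∈ t, Irreducible m ∧ m.Monic :=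
    fun t ht m hm ↦ (mem_monicIrreduciblesDegreeLE.mp (ht hm)).imp_right And.left
  ext t
  simp only [mem_filter, mem_powerset]
  constructor
  · rintro ⟨ht, hdvd⟩
    exact (subset_toFinset_normalizedFactors_iff hf.ne_zero (hirr t ht)).mpr hdvd
  · intro ht
    have ht' := ht.trans (toFinset_normalizedFactors_subset hf)
    exact ⟨ht', (subset_toFinset_normalizedFactors_iff hf.ne_zero (hirr t ht')).mp ht⟩

lemma sum_monicsOfDegree_sum_powerset (n : ℕ) (G : Finset F[X] → ℚ) :
    ∑ f ∈ monicsOfDegree F n, ∑ t ∈ (normalizedFactors f).toFinset.powerset, G t =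
      ∑ t ∈ (monicIrreduciblesDegreeLE F n).powerset,
        (if (∏ m ∈ t, m).natDegree ≤ n then (Fintype.card F : ℚ) ^ (n - (∏ m ∈ t, m).natDegree)
          else 0) * G t := by
  classical
  have hfactors : ∀ f ∈ monicsOfDegree F n,
      ∑ t ∈ (normalizedFactors f).toFinset.powerset, G t =
        ∑ t ∈ (monicIrreduciblesDegreeLE F n).powerset, if (∏ m ∈ t, m) ∣ f then G t else 0 :=
    fun f hf ↦ by
      rw [← sum_filter, filter_dvd_powerset_monicIrreduciblesDegreeLE (mem_monicsOfDegree.mp hf)]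
  rw [sum_congr rfl hfactors, sum_comm]
  refine sum_congr rfl fun t ht ↦ ?_
  have hmonic : IsMonicOfDegree (∏ m ∈ t, m) (∏ m ∈ t, m).natDegree :=
    ⟨rfl, monic_prod_of_monic _ _ fun m hm ↦
      (mem_monicIrreduciblesDegreeLE.mp (mem_powerset.mp ht hm)).2.1⟩
  rw [sum_ite, sum_const_zero, add_zero, sum_const, card_filter_dvd_monicsOfDegree hmonic,
    nsmul_eq_mul]
  split_ifs <;> simp

-- A squarefree monic `d` is encoded by the set `t` of its irreducible factors, with
-- `μ(d) = (-1)^#t`; so this is `∑_{deg d = k} μ(d)`.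
variable (F) in
noncomputable def mobiusSum (k : ℕ) : ℚ :=
  ∑ t ∈ (monicIrreduciblesDegreeLE F k).powerset with (∏ m ∈ t, m).natDegree = k, (-1) ^ #t

lemma filter_powerset_monicIrreduciblesDegreeLE {k n : ℕ} (hkn : k ≤ n) :
    {t ∈ (monicIrreduciblesDegreeLE F n).powerset | (∏ m ∈ t, m).natDegree = k} =
      {t ∈ (monicIrreduciblesDegreeLE F k).powerset | (∏ m ∈ t, m).natDegree = k} := by
  ext t
  simp only [mem_filter, mem_powerset, and_congr_left_iff]
  intro hdeg
  refine ⟨fun ht m hm ↦ ?_, fun ht ↦ ht.trans (monicIrreduciblesDegreeLE_mono hkn)⟩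
  obtain ⟨hirr, hmon, -⟩ := mem_monicIrreduciblesDegreeLE.mp (ht hm)
  have hprod : (∏ m ∈ t, m) ≠ 0 := prod_ne_zero_iff.mpr fun m' hm' ↦
    (mem_monicIrreduciblesDegreeLE.mp (ht hm')).1.ne_zero
  exact mem_monicIrreduciblesDegreeLE.mpr
    ⟨hirr, hmon, hdeg ▸ natDegree_le_of_dvd (dvd_prod_of_mem _ hm) hprod⟩

lemma sum_powerset_eq_sum_mobiusSum {n : ℕ} (g : ℕ → ℚ) (hg : ∀ k, n < k → g k = 0) :
    ∑ t ∈ (monicIrreduciblesDegreeLE F n).powerset, (-1) ^ #t * g (∏ m ∈ t, m).natDegree =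
      ∑ k ∈ range (n + 1), mobiusSum F k * g k := by
  rw [← sum_filter_of_ne (p := fun t ↦ (∏ m ∈ t, m).natDegree ∈ range (n + 1)),
    ← sum_fiberwise_eq_sum_filter]
  · refine sum_congr rfl fun k hk ↦ ?_
    rw [filter_powerset_monicIrreduciblesDegreeLE (by simpa [Nat.lt_succ_iff] using hk),
      mobiusSum, sum_mul]
    exact sum_congr rfl fun t ht ↦ by rw [(mem_filter.mp ht).2]
  · intro t _ ht
    by_contra hk
    exact ht (by rw [hg _ (by simpa [Nat.lt_succ_iff] using hk), mul_zero])

lemma sum_monicsOfDegree_sum_powerset_neg_one_pow (n : ℕ) (w : ℕ → ℚ) :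
    ∑ f ∈ monicsOfDegree F n, ∑ t ∈ (normalizedFactors f).toFinset.powerset,
        (-1) ^ #t * w (∏ m ∈ t, m).natDegree =
      ∑ k ∈ range (n + 1), mobiusSum F k * ((Fintype.card F : ℚ) ^ (n - k) * w k) := by
  set g : ℕ → ℚ := fun k ↦ (if k ≤ n then (Fintype.card F : ℚ) ^ (n - k) else 0) * w k
  rw [sum_monicsOfDegree_sum_powerset, ← sum_congr rfl fun t _ ↦ mul_left_comm _ _ _,
    sum_powerset_eq_sum_mobiusSum g fun k hk ↦ by simp [g, hk.not_ge]]
  refine sum_congr rfl fun k hk ↦ ?_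
  simp [g, Nat.lt_succ_iff.mp (mem_range.mp hk)]

lemma sum_range_mobiusSum_mul_pow (n : ℕ) :
    ∑ k ∈ range (n + 1), mobiusSum F k * (Fintype.card F : ℚ) ^ (n - k) =
      if n = 0 then 1 else 0 := by
  have hsum := sum_monicsOfDegree_sum_powerset_neg_one_pow (F := F) n fun _ ↦ 1
  simp only [mul_one] at hsum
  rw [← hsum]
  have hfactors : ∀ f ∈ monicsOfDegree F n,
      ∑ t ∈ (normalizedFactors f).toFinset.powerset, (-1 : ℚ) ^ #t = if f = 1 then 1 else 0 := by
    intro f hf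
    have hf := mem_monicsOfDegree.mp hf
    have hcast := congrArg (Int.cast : ℤ → ℚ) (sum_powerset_neg_one_pow_card
      (x := (normalizedFactors f).toFinset))
    push_cast at hcast
    have hempty : (normalizedFactors f).toFinset = ∅ ↔ f = 1 := by
      rw [Multiset.toFinset_eq_empty, normalizedFactors_eq_zero_iff hf.ne_zero,
        hf.monic.isUnit_iff]
    simp only [hcast, hempty]
  rw [sum_congr rfl hfactors, sum_ite_eq']
  simp [mem_monicsOfDegree, isMonicOfDegree_iff', eq_comm]

lemma mobiusSum_eq (k : ℕ) :
    mobiusSum F k = if k = 0 then 1 else if k = 1 then -(Fintype.card F : ℚ) else 0 :=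
  eq_ite_of_sum_range_mul_pow_eq_ite sum_range_mobiusSum_mul_pow k

lemma sum_range_mobiusSum_mul (n : ℕ) (c : ℕ → ℚ) :
    ∑ k ∈ range (n + 2), mobiusSum F k * c k = c 0 - Fintype.card F * c 1 := by
  rw [sum_range_succ', sum_range_succ']
  simp [mobiusSum_eq, sub_eq_neg_add]

lemma sum_totientFF_monicsOfDegree (n : ℕ) :
    ∑ f ∈ monicsOfDegree F n, totientFF (Fintype.card F) f =
      (Fintype.card F : ℚ) ^ (2 * n) - if n = 0 then 0 else (Fintype.card F : ℚ) ^ (2 * n - 1) := by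
  set Q : ℚ := (Fintype.card F : ℚ) with hQdef
  have hQ : Q ≠ 0 := by simp [Q]
  calc ∑ f ∈ monicsOfDegree F n, totientFF (Fintype.card F) f
      = Q ^ n * ∑ f ∈ monicsOfDegree F n, ∑ t ∈ (normalizedFactors f).toFinset.powerset,
          (-1) ^ #t * (Q ^ (∏ m ∈ t, m).natDegree)⁻¹ := by
        rw [mul_sum]
        refine sum_congr rfl fun f hf ↦ ?_
        rw [totientFF_eq_sum_powerset, (mem_monicsOfDegree.mp hf).natDegree_eq]
    _ = Q ^ n * ∑ k ∈ range (n + 1), mobiusSum F k * (Q ^ (n - k) * (Q ^ k)⁻¹) := by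
        rw [sum_monicsOfDegree_sum_powerset_neg_one_pow n fun k ↦ (Q ^ k)⁻¹]
    _ = _ := by
        rcases n with _ | n
        · simp [mobiusSum_eq]
        · rw [sum_range_mobiusSum_mul, ← hQdef, if_neg n.succ_ne_zero, Nat.add_sub_cancel,
            Nat.sub_zero, show 2 * (n + 1) - 1 = 2 * n + 1 by omega]
          field_simp
          ring

end Totient

theorem stmt2_general (q : ℕ)
    (F : Type) [Field F] [Fintype F] [DecidableEq F] (hF : Fintype.card F = q)
    (X : ℕ) (hX : 0 < X) :
    (∑ᶠ f ∈ {f : F[X] | f.Monic ∧ f.natDegree < X}, totientFF q f) =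
      ((q : ℚ) ^ (2 * X - 1) + 1) / ((q : ℚ) + 1) := by
  subst hF
  obtain ⟨m, rfl⟩ : ∃ m, X = m + 1 := ⟨X - 1, by omega⟩
  rw [finsum_mem_monic_natDegree_lt, eq_div_iff (by positivity), mul_comm]
  simp_rw [sum_totientFF_monicsOfDegree]
  rw [add_one_mul_sum_range_pow_two_mul_sub, show 2 * (m + 1) - 1 = 2 * m + 1 by omega]

/-- The summatory totient over monic polynomials of degree `< X` equals
`(q^(2X-1) + 1)/(q + 1)`. -/
theorem stmt2 (q : ℕ) (hq : ∃ p n : ℕ, p.Prime ∧ 0 < n ∧ q = p ^ n)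
    (F : Type) [Field F] [Fintype F] [DecidableEq F] (hF : Fintype.card F = q)
    (X : ℕ) (hX : 0 < X) :
    (∑ᶠ f ∈ {f : F[X] | f.Monic ∧ f.natDegree < X}, totientFF q f) =
      ((q : ℚ) ^ (2 * X - 1) + 1) / ((q : ℚ) + 1) :=
  stmt2_general q F hF X hX
end
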